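/- arXiv:math/0512125 — 8 statements merged into one kernel-verified Lean document; each statement's English description precedes it below -/
import Mathlib

section
/- In the free abelian group Z⁷ with orthonormal basis η₀,...,η₆, let P be the subgroup generated by p₀ = η₀+η₃+η₄+η₅, p₁ = η₁+η₃+η₄+η₆, p₂ = η₂+η₃+η₅+η₆. Then the elements of P of squared norm 4 are exactly ±p₀, ±p₁, ±p₂, ±(p₀−p₁), ±(p₀−p₂), ±(p₁−p₂). -/
/-- The standard inner product on `ℤ⁷`. -/
def dot (x y : Fin 7 → ℤ) : ℤ := ∑ i, x i * y i

/-- The orthonormal basis `η₀, …, η₆` of `ℤ⁷`. -/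
def eta (i : Fin 7) : Fin 7 → ℤ := Pi.single i 1

/-- Characters of the three projective indecomposable modules. -/
def p0 : Fin 7 → ℤ := eta 0 + eta 3 + eta 4 + eta 5
def p1 : Fin 7 → ℤ := eta 1 + eta 3 + eta 4 + eta 6
def p2 : Fin 7 → ℤ := eta 2 + eta 3 + eta 5 + eta 6

/-- The subgroup `P` of `ℤ⁷` generated by `p₀, p₁, p₂`. -/
def P : Submodule ℤ (Fin 7 → ℤ) := Submodule.span ℤ {p0, p1, p2}

lemma key_quad (a b c : ℤ) (h : a^2+b^2+c^2+a*b+b*c+a*c = 1) :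
    (a=1∧b=0∧c=0) ∨ (a=0∧b=1∧c=0) ∨ (a=0∧b=0∧c=1) ∨
    (a=-1∧b=0∧c=0) ∨ (a=0∧b=-1∧c=0) ∨ (a=0∧b=0∧c=-1) ∨
    (a=1∧b=-1∧c=0) ∨ (a=-1∧b=1∧c=0) ∨ (a=1∧b=0∧c=-1) ∨
    (a=-1∧b=0∧c=1) ∨ (a=0∧b=1∧c=-1) ∨ (a=0∧b=-1∧c=1) := by
  have ha : a^2 ≤ 4 := by nlinarith [sq_nonneg (a+2*b), sq_nonneg (a+2*c), sq_nonneg (b+c), sq_nonneg (b-c)]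
  have hb : b^2 ≤ 4 := by nlinarith [sq_nonneg (b+2*a), sq_nonneg (b+2*c), sq_nonneg (a+c), sq_nonneg (a-c)]
  have hc : c^2 ≤ 4 := by nlinarith [sq_nonneg (c+2*a), sq_nonneg (c+2*b), sq_nonneg (a+b), sq_nonneg (a-b)]
  have ha1 : -2 ≤ a := by nlinarith
  have ha2 : a ≤ 2 := by nlinarith
  have hb1 : -2 ≤ b := by nlinarith
  have hb2 : b ≤ 2 := by nlinarith
  have hc1 : -2 ≤ c := by nlinarith
  have hc2 : c ≤ 2 := by nlinarith
  interval_cases a <;> interval_cases b <;> interval_cases c <;> omega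

lemma mem_P_rep (v : Fin 7 → ℤ) (hv : v ∈ P) :
    ∃ a b c : ℤ, v = a • p0 + b • p1 + c • p2 := by
  rw [P, show ({p0, p1, p2} : Set (Fin 7 → ℤ)) = insert p0 {p1, p2} from rfl,
    Submodule.mem_span_insert] at hv
  obtain ⟨a, z, hz, rfl⟩ := hv
  rw [Submodule.mem_span_pair] at hz
  obtain ⟨b, c, rfl⟩ := hz
  exact ⟨a, b, c, by abel⟩

lemma dot_comb (a b c : ℤ) :
    dot (a • p0 + b • p1 + c • p2) (a • p0 + b • p1 + c • p2)
      = 4*(a^2+b^2+c^2+a*b+b*c+a*c) := by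
  simp [dot, Fin.sum_univ_seven, p0, p1, p2, eta, Pi.single_apply]
  ring

/-- The elements of `P` of squared norm 4 are exactly
`±p₀, ±p₁, ±p₂, ±(p₀−p₁), ±(p₀−p₂), ±(p₁−p₂)`. -/
theorem stmt_4 (v : Fin 7 → ℤ) (hv : v ∈ P) :
    dot v v = 4 ↔
      v ∈ ({p0, p1, p2, -p0, -p1, -p2,
            p0 - p1, p1 - p0, p0 - p2, p2 - p0, p1 - p2, p2 - p1} : Set (Fin 7 → ℤ)) := by
  obtain ⟨a, b, c, rfl⟩ := mem_P_rep v hv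
  rw [dot_comb]
  simp only [Set.mem_insert_iff, Set.mem_singleton_iff]
  constructor
  · intro h
    have h' : a^2+b^2+c^2+a*b+b*c+a*c = 1 := by omega
    rcases key_quad a b c h' with
      ⟨rfl,rfl,rfl⟩|⟨rfl,rfl,rfl⟩|⟨rfl,rfl,rfl⟩|⟨rfl,rfl,rfl⟩|⟨rfl,rfl,rfl⟩|⟨rfl,rfl,rfl⟩|
      ⟨rfl,rfl,rfl⟩|⟨rfl,rfl,rfl⟩|⟨rfl,rfl,rfl⟩|⟨rfl,rfl,rfl⟩|⟨rfl,rfl,rfl⟩|⟨rfl,rfl,rfl⟩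
    · exact Or.inl (by module)
    · exact Or.inr (Or.inl (by module))
    · exact Or.inr (Or.inr (Or.inl (by module)))
    · exact Or.inr (Or.inr (Or.inr (Or.inl (by module))))
    · exact Or.inr (Or.inr (Or.inr (Or.inr (Or.inl (by module)))))
    · exact Or.inr (Or.inr (Or.inr (Or.inr (Or.inr (Or.inl (by module))))))
    · exact Or.inr (Or.inr (Or.inr (Or.inr (Or.inr (Or.inr (Or.inl (by module)))))))
    · exact Or.inr (Or.inr (Or.inr (Or.inr (Or.inr (Or.inr (Or.inr (Or.inl (by module))))))))
    · exact Or.inr (Or.inr (Or.inr (Or.inr (Or.inr (Or.inr (Or.inr (Or.inr (Or.inl (by module)))))))))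
    · exact Or.inr (Or.inr (Or.inr (Or.inr (Or.inr (Or.inr (Or.inr (Or.inr (Or.inr (Or.inl (by module))))))))))
    · exact Or.inr (Or.inr (Or.inr (Or.inr (Or.inr (Or.inr (Or.inr (Or.inr (Or.inr (Or.inr (Or.inl (by module)))))))))))
    · exact Or.inr (Or.inr (Or.inr (Or.inr (Or.inr (Or.inr (Or.inr (Or.inr (Or.inr (Or.inr (Or.inr (by module)))))))))))
  · intro h
    have hinj : ∀ a' b' c' : ℤ,
        a • p0 + b • p1 + c • p2 = a' • p0 + b' • p1 + c' • p2 →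
        a = a' ∧ b = b' ∧ c = c' := by
      intro a' b' c' he
      have h0 := congrFun he 0
      have h1 := congrFun he 1
      have h2 := congrFun he 2
      simp [p0, p1, p2, eta, Pi.single_apply] at h0 h1 h2
      exact ⟨h0, h1, h2⟩
    rcases h with h|h|h|h|h|h|h|h|h|h|h|h
    · obtain ⟨rfl, rfl, rfl⟩ := hinj 1 0 0 (by rw [h]; module); ring
    · obtain ⟨rfl, rfl, rfl⟩ := hinj 0 1 0 (by rw [h]; module); ring
    · obtain ⟨rfl, rfl, rfl⟩ := hinj 0 0 1 (by rw [h]; module); ring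
    · obtain ⟨rfl, rfl, rfl⟩ := hinj (-1) 0 0 (by rw [h]; module); ring
    · obtain ⟨rfl, rfl, rfl⟩ := hinj 0 (-1) 0 (by rw [h]; module); ring
    · obtain ⟨rfl, rfl, rfl⟩ := hinj 0 0 (-1) (by rw [h]; module); ring
    · obtain ⟨rfl, rfl, rfl⟩ := hinj 1 (-1) 0 (by rw [h]; module); ring
    · obtain ⟨rfl, rfl, rfl⟩ := hinj (-1) 1 0 (by rw [h]; module); ring
    · obtain ⟨rfl, rfl, rfl⟩ := hinj 1 0 (-1) (by rw [h]; module); ring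
    · obtain ⟨rfl, rfl, rfl⟩ := hinj (-1) 0 1 (by rw [h]; module); ring
    · obtain ⟨rfl, rfl, rfl⟩ := hinj 0 1 (-1) (by rw [h]; module); ring
    · obtain ⟨rfl, rfl, rfl⟩ := hinj 0 (-1) 1 (by rw [h]; module); ring
end

section
/- In Z⁷ with orthonormal basis η₀,...,η₆, let L⁰ be the orthogonal complement (in Z⁷) of the subgroup P generated by η₀+η₃+η₄+η₅, η₁+η₃+η₄+η₆, η₂+η₃+η₅+η₆. Then up to sign, the elements of L⁰ of squared norm 3 are exactly: η₀+η₁−η₄, η₀+η₂−η₅, η₀−η₃+η₆, η₁+η₂−η₆, η₁−η₃+η₅, η₂−η₃+η₄. -/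
open Matrix

def L0 : Set (Fin 7 → ℤ) := {x | ∀ p ∈ P, dot x p = 0}

def normThreeRoots : Set (Fin 7 → ℤ) :=
  {eta 0 + eta 1 - eta 4, eta 0 + eta 2 - eta 5, eta 0 - eta 3 + eta 6,
    eta 1 + eta 2 - eta 6, eta 1 - eta 3 + eta 5, eta 2 - eta 3 + eta 4}

/-- The element of `L0` with coordinates `d, e, f, g` at `η₃, …, η₆`. -/
def L0.mk (d e f g : ℤ) : Fin 7 → ℤ := ![-(d + e + f), -(d + e + g), -(d + f + g), d, e, f, g]

theorem dot_eq_dotProduct (x y : Fin 7 → ℤ) : dot x y = x ⬝ᵥ y := rfl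

theorem dot_eta (x : Fin 7 → ℤ) (i : Fin 7) : dot x (eta i) = x i := by
  rw [dot_eq_dotProduct, eta, dotProduct_single, mul_one]

theorem dot_add (x y z : Fin 7 → ℤ) : dot x (y + z) = dot x y + dot x z := dotProduct_add x y z

theorem dot_neg_neg (x : Fin 7 → ℤ) : dot (-x) (-x) = dot x x := by
  simp only [dot_eq_dotProduct, neg_dotProduct, dotProduct_neg, neg_neg]

theorem forall_mem_span_dot_eq_zero_iff (x : Fin 7 → ℤ) (s : Set (Fin 7 → ℤ)) :
    (∀ p ∈ Submodule.span ℤ s, dot x p = 0) ↔ ∀ p ∈ s, dot x p = 0 :=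
  Submodule.span_le (p := LinearMap.ker (dotProductBilin ℤ ℤ x))

theorem mem_L0_iff (x : Fin 7 → ℤ) :
    x ∈ L0 ↔ x 0 + x 3 + x 4 + x 5 = 0 ∧ x 1 + x 3 + x 4 + x 6 = 0 ∧ x 2 + x 3 + x 5 + x 6 = 0 := by
  simp only [L0, P, Set.mem_ofPred_eq, forall_mem_span_dot_eq_zero_iff, Set.forall_mem_insert,
    Set.mem_singleton_iff, forall_eq, p0, p1, p2, dot_add, dot_eta]

theorem neg_mem_L0_iff (x : Fin 7 → ℤ) : -x ∈ L0 ↔ x ∈ L0 := by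
  simp only [mem_L0_iff, Pi.neg_apply]
  omega

theorem exists_eq_L0_mk_of_mem_L0 {x : Fin 7 → ℤ} (hx : x ∈ L0) :
    ∃ d e f g, x = L0.mk d e f g := by
  rw [mem_L0_iff] at hx
  refine ⟨x 3, x 4, x 5, x 6, funext fun i => ?_⟩
  fin_cases i <;>
    simp only [L0.mk, Fin.zero_eta, Fin.mk_one, Fin.reduceFinMk, cons_val_zero, cons_val_one,
      cons_val] <;> omega

theorem abs_le_one_of_sum_mul_self_le_three {ι : Type*} [Fintype ι] {x : ι → ℤ}
    (h : ∑ i, x i * x i ≤ 3) (i : ι) : |x i| ≤ 1 := by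
  have hi : x i * x i ≤ 3 :=
    (Finset.single_le_sum (fun j _ => mul_self_nonneg (x j)) (Finset.mem_univ i)).trans h
  have : |x i| < 2 := abs_lt_of_sq_lt_sq (by linarith [sq (x i)]) zero_le_two
  omega

theorem L0_mk_mem_normThreeRoots {d e f g : ℤ} (hd : |d| ≤ 1) (he : |e| ≤ 1) (hf : |f| ≤ 1)
    (hg : |g| ≤ 1) (h : dot (L0.mk d e f g) (L0.mk d e f g) = 3) :
    L0.mk d e f g ∈ normThreeRoots ∨ -L0.mk d e f g ∈ normThreeRoots := by
  simp only [normThreeRoots, Set.mem_insert_iff, Set.mem_singleton_iff]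
  rcases Int.abs_le_one_iff.mp hd with rfl | rfl | rfl <;>
  rcases Int.abs_le_one_iff.mp he with rfl | rfl | rfl <;>
  rcases Int.abs_le_one_iff.mp hf with rfl | rfl | rfl <;>
  rcases Int.abs_le_one_iff.mp hg with rfl | rfl | rfl <;>
  revert h <;> decide

theorem mem_L0_of_mem_normThreeRoots {y : Fin 7 → ℤ} (hy : y ∈ normThreeRoots) :
    y ∈ L0 ∧ dot y y = 3 := by
  rw [mem_L0_iff]
  rcases hy with rfl | rfl | rfl | rfl | rfl | rfl <;> decide

/-- Up to sign, the elements of `L⁰ = P^⊥` of squared norm 3 are exactly the six listed ones. -/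
theorem stmt_5 (x : Fin 7 → ℤ) :
    ((∀ p ∈ P, dot x p = 0) ∧ dot x x = 3) ↔
      (x ∈ ({eta 0 + eta 1 - eta 4, eta 0 + eta 2 - eta 5, eta 0 - eta 3 + eta 6,
             eta 1 + eta 2 - eta 6, eta 1 - eta 3 + eta 5, eta 2 - eta 3 + eta 4} :
             Set (Fin 7 → ℤ)) ∨
       -x ∈ ({eta 0 + eta 1 - eta 4, eta 0 + eta 2 - eta 5, eta 0 - eta 3 + eta 6,
             eta 1 + eta 2 - eta 6, eta 1 - eta 3 + eta 5, eta 2 - eta 3 + eta 4} :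
             Set (Fin 7 → ℤ))) := by
  show x ∈ L0 ∧ dot x x = 3 ↔ x ∈ normThreeRoots ∨ -x ∈ normThreeRoots
  constructor
  · rintro ⟨hx, hnorm⟩
    obtain ⟨d, e, f, g, rfl⟩ := exists_eq_L0_mk_of_mem_L0 hx
    have hbound := abs_le_one_of_sum_mul_self_le_three hnorm.le
    exact L0_mk_mem_normThreeRoots (hbound 3) (hbound 4) (hbound 5) (hbound 6) hnorm
  · rintro (hx | hx)
    · exact mem_L0_of_mem_normThreeRoots hx
    · obtain ⟨hL, hnorm⟩ := mem_L0_of_mem_normThreeRoots hx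
      exact ⟨(neg_mem_L0_iff x).mp hL, dot_neg_neg x ▸ hnorm⟩
end

section
/- In Z⁷ with orthonormal basis η₀,...,η₆ and L⁰ the orthogonal complement of the subgroup P generated by η₀+η₃+η₄+η₅, η₁+η₃+η₄+η₆, η₂+η₃+η₅+η₆, the element η₀+η₁+η₂−η₃ lies in L⁰, has squared norm 4, and is the unique element of L⁰ of squared norm 4 (up to sign) that is orthogonal to every other squared-norm-4 element of L⁰. -/
/-- The orthogonal complement `L⁰` of `P` in `ℤ⁷`. -/
def inL0 (x : Fin 7 → ℤ) : Prop := ∀ p ∈ P, dot x p = 0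

private lemma hw : eta 0 + eta 1 + eta 2 - eta 3 = ![1,1,1,-1,0,0,0] := by decide

private lemma inL0_iff (v : Fin 7 → ℤ) :
    inL0 v ↔ dot v p0 = 0 ∧ dot v p1 = 0 ∧ dot v p2 = 0 := by
  constructor
  · intro h
    refine ⟨h _ ?_, h _ ?_, h _ ?_⟩ <;>
      exact Submodule.subset_span (by simp [Set.mem_insert_iff])
  · rintro ⟨h0, h1, h2⟩ p hp
    induction hp using Submodule.span_induction with
    | mem x hx =>
        rcases hx with rfl | rfl | rfl <;> assumption
    | zero => simp [dot]
    | add x y _ _ ihx ihy =>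
        have : dot v (x + y) = dot v x + dot v y := by
          simp [dot, Pi.add_apply, mul_add, Finset.sum_add_distrib]
        rw [this, ihx, ihy]; ring
    | smul c x _ ih =>
        have : dot v (c • x) = c * dot v x := by
          simp [dot, Finset.mul_sum, mul_left_comm]
        rw [this, ih]; ring

def L4 : List (Fin 7 → ℤ) :=
[![1, 1, 1, -1, 0, 0, 0],
 ![0, 0, -1, -1, 0, 1, 1],
 ![0, -1, 0, -1, 1, 0, 1],
 ![-1, 0, 0, -1, 1, 1, 0],
 ![1, 0, -1, 0, -1, 0, 1],
 ![0, 1, -1, 0, -1, 1, 0],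
 ![1, -1, 0, 0, 0, -1, 1],
 ![-1, 1, 0, 0, 0, 1, -1],
 ![0, -1, 1, 0, 1, -1, 0],
 ![-1, 0, 1, 0, 1, 0, -1],
 ![1, 0, 0, 1, -1, -1, 0],
 ![0, 1, 0, 1, -1, 0, -1],
 ![0, 0, 1, 1, 0, -1, -1],
 ![-1, -1, -1, 1, 0, 0, 0]]

private lemma quad : ∀ a ∈ Finset.Icc (-2:ℤ) 2, ∀ b ∈ Finset.Icc (-2:ℤ) 2,
    ∀ c ∈ Finset.Icc (-2:ℤ) 2, ∀ d ∈ Finset.Icc (-2:ℤ) 2,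
    (a+b+c)^2+(a+b+d)^2+(a+c+d)^2+a^2+b^2+c^2+d^2 = 4 →
    (![-(a+b+c), -(a+b+d), -(a+c+d), a, b, c, d] : Fin 7 → ℤ) ∈ L4 := by decide


private lemma cval (x0 x1 x2 x3 x4 x5 x6 : ℤ) :
    (![x0,x1,x2,x3,x4,x5,x6] : Fin 7 → ℤ) 0 = x0 ∧ (![x0,x1,x2,x3,x4,x5,x6] : Fin 7 → ℤ) 1 = x1 ∧
    (![x0,x1,x2,x3,x4,x5,x6] : Fin 7 → ℤ) 2 = x2 ∧ (![x0,x1,x2,x3,x4,x5,x6] : Fin 7 → ℤ) 3 = x3 ∧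
    (![x0,x1,x2,x3,x4,x5,x6] : Fin 7 → ℤ) 4 = x4 ∧ (![x0,x1,x2,x3,x4,x5,x6] : Fin 7 → ℤ) 5 = x5 ∧
    (![x0,x1,x2,x3,x4,x5,x6] : Fin 7 → ℤ) 6 = x6 :=
  ⟨rfl, rfl, rfl, rfl, rfl, rfl, rfl⟩

private lemma bnd (x : ℤ) (h : x * x ≤ 4) : -2 ≤ x ∧ x ≤ 2 := by
  constructor <;> nlinarith [sq_nonneg (x+2), sq_nonneg (x-2)]

set_option maxHeartbeats 1000000 in
private lemma classify (v : Fin 7 → ℤ) (h0 : inL0 v) (h4 : dot v v = 4) : v ∈ L4 := by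
  rw [inL0_iff] at h0
  obtain ⟨e0, e1, e2⟩ := h0
  simp [dot, p0, p1, p2, eta, Fin.sum_univ_seven, Pi.single_apply] at e0 e1 e2 h4
  have n0 := mul_self_nonneg (v 0); have n1 := mul_self_nonneg (v 1)
  have n2 := mul_self_nonneg (v 2); have n3 := mul_self_nonneg (v 3)
  have n4 := mul_self_nonneg (v 4); have n5 := mul_self_nonneg (v 5)
  have n6 := mul_self_nonneg (v 6)
  have b3 := bnd (v 3) (by linarith)
  have b4 := bnd (v 4) (by linarith)
  have b5 := bnd (v 5) (by linarith)
  have b6 := bnd (v 6) (by linarith)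
  have hv : v = ![-(v 3 + v 4 + v 5), -(v 3 + v 4 + v 6), -(v 3 + v 5 + v 6), v 3, v 4, v 5, v 6] := by
    funext i
    obtain ⟨c0,c1,c2,c3,c4,c5,c6⟩ := cval (-(v 3 + v 4 + v 5)) (-(v 3 + v 4 + v 6))
      (-(v 3 + v 5 + v 6)) (v 3) (v 4) (v 5) (v 6)
    fin_cases i <;> simp only [Fin.zero_eta, Fin.mk_one, Fin.reduceFinMk] <;> linarith [c0,c1,c2,c3,c4,c5,c6]
  rw [hv]
  refine quad _ (Finset.mem_Icc.2 b3) _ (Finset.mem_Icc.2 b4) _ (Finset.mem_Icc.2 b5)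
    _ (Finset.mem_Icc.2 b6) (by linear_combination h4 + (v 3 + v 4 + v 5 - v 0) * e0
      + (v 3 + v 4 + v 6 - v 1) * e1 + (v 3 + v 5 + v 6 - v 2) * e2)

private lemma hA : inL0 ![0,0,-1,-1,0,1,1] := (inL0_iff _).2 (by decide)
private lemma hB : inL0 ![0,-1,0,-1,1,0,1] := (inL0_iff _).2 (by decide)


/-- `η₀+η₁+η₂−η₃` lies in `L⁰`, has squared norm 4, and is, up to sign, the unique
element of `L⁰` of squared norm 4 orthogonal to every other squared-norm-4 element of `L⁰`. -/
theorem stmt_6 :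
    inL0 (eta 0 + eta 1 + eta 2 - eta 3) ∧
    dot (eta 0 + eta 1 + eta 2 - eta 3) (eta 0 + eta 1 + eta 2 - eta 3) = 4 ∧
    (∀ v, inL0 v → dot v v = 4 → v ≠ eta 0 + eta 1 + eta 2 - eta 3 →
        v ≠ -(eta 0 + eta 1 + eta 2 - eta 3) → dot (eta 0 + eta 1 + eta 2 - eta 3) v = 0) ∧
    (∀ u, inL0 u → dot u u = 4 →
        (∀ v, inL0 v → dot v v = 4 → v ≠ u → v ≠ -u → dot u v = 0) →
        u = eta 0 + eta 1 + eta 2 - eta 3 ∨ u = -(eta 0 + eta 1 + eta 2 - eta 3)) := by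
  refine ⟨(inL0_iff _).2 (by decide), by decide, ?_, ?_⟩
  · intro v h0 h4 hne1 hne2
    have hm := classify v h0 h4
    rw [hw]
    simp only [L4, List.mem_cons, List.not_mem_nil, or_false] at hm
    rcases hm with rfl|rfl|rfl|rfl|rfl|rfl|rfl|rfl|rfl|rfl|rfl|rfl|rfl|rfl <;>
      first
        | (exact absurd hw.symm hne1)
        | (refine absurd ?_ hne2; rw [hw]; decide)
        | decide
  · intro u h0 h4 H
    have hm := classify u h0 h4
    simp only [L4, List.mem_cons, List.not_mem_nil, or_false] at hm
    rcases hm with rfl|rfl|rfl|rfl|rfl|rfl|rfl|rfl|rfl|rfl|rfl|rfl|rfl|rfl <;>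
      first
        | (left; exact hw.symm)
        | (right; rw [hw]; decide)
        | (exact absurd (H ![0,0,-1,-1,0,1,1] hA (by decide) (by decide) (by decide)) (by decide))
        | (exact absurd (H ![0,-1,0,-1,1,0,1] hB (by decide) (by decide) (by decide)) (by decide))
end

section
/- The group of isometries of Z⁷ (with orthonormal basis η₀,...,η₆) preserving the subgroup P generated by η₀+η₃+η₄+η₅, η₁+η₃+η₄+η₆, η₂+η₃+η₅+η₆ is generated by −Id together with the signed permutations (0,1,2)(4,6,5), (1,2)(4,5), and (2,−3)(5,−6), where (i,−j) means ηᵢ ↦ −ηⱼ and ηⱼ ↦ −ηᵢ. -/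
/-- The signed permutation of `ℤ⁷` sending `η_i` to `ε(σ⁻¹ i) • η_{σ⁻¹ i}`. -/
def sgnPerm (σ : Equiv.Perm (Fin 7)) (ε : Fin 7 → ℤˣ) : (Fin 7 → ℤ) ≃ₗ[ℤ] (Fin 7 → ℤ) where
  toFun x := fun j => (ε j : ℤ) * x (σ j)
  invFun x := fun j => (ε (σ⁻¹ j) : ℤ) * x (σ⁻¹ j)
  left_inv x := funext fun j => by
    simp only [Equiv.Perm.inv_def, Equiv.apply_symm_apply, ← mul_assoc, ← Units.val_mul, Int.units_mul_self,
      Units.val_one, one_mul]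
  right_inv x := funext fun j => by
    simp only [Equiv.Perm.inv_def, Equiv.symm_apply_apply, ← mul_assoc, ← Units.val_mul, Int.units_mul_self,
      Units.val_one, one_mul]
  map_add' x y := funext fun j => by simp [mul_add]
  map_smul' c x := funext fun j => by simp [Pi.smul_apply, smul_eq_mul]; ring

/-- The signed permutation `(0,1,2)(4,6,5)` (as a map `η_i ↦ η_{π i}`). -/
def g1 : (Fin 7 → ℤ) ≃ₗ[ℤ] (Fin 7 → ℤ) :=
  sgnPerm (Equiv.mk (![2,0,1,3,5,6,4] ·) (![1,2,0,3,6,4,5] ·) (by decide) (by decide))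
    (fun _ => 1)

/-- The signed permutation `(1,2)(4,5)`. -/
def g2 : (Fin 7 → ℤ) ≃ₗ[ℤ] (Fin 7 → ℤ) :=
  sgnPerm (Equiv.mk (![0,2,1,3,5,4,6] ·) (![0,2,1,3,5,4,6] ·) (by decide) (by decide))
    (fun _ => 1)

/-- The signed permutation `(2,−3)(5,−6)`: `η₂ ↦ −η₃`, `η₃ ↦ −η₂`, `η₅ ↦ −η₆`, `η₆ ↦ −η₅`. -/
def g3 : (Fin 7 → ℤ) ≃ₗ[ℤ] (Fin 7 → ℤ) :=
  sgnPerm (Equiv.mk (![0,1,3,2,4,6,5] ·) (![0,1,3,2,4,6,5] ·) (by decide) (by decide))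
    (fun j => if j = 2 ∨ j = 3 ∨ j = 5 ∨ j = 6 then -1 else 1)

/-- `−Id`. -/
def gneg : (Fin 7 → ℤ) ≃ₗ[ℤ] (Fin 7 → ℤ) := sgnPerm 1 (fun _ => -1)

/-! An isometry of `ℤ⁷` sends each `ηⱼ` to some `±ηₖ`. The columns `(p₀ k, p₁ k, p₂ k)` are
nonzero and pairwise distinct up to sign, so an isometry fixing `p₀, p₁, p₂` is the identity.
An isometry preserving `P` sends `w = p₀ + p₁ + p₂` to one of the eight vectors of norm `24` in `P`,
and these form a single orbit of `Γ = ⟨−1, g₁, g₂, g₃⟩`. An isometry fixing `w` permutes `p₀, p₁, p₂` (the vectors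
`x ∈ P` with `⟨x, x⟩ = 4` and `⟨x, w⟩ = 8`), and each permutation of them is realised in `⟨g₁, g₂⟩`. -/

local notation "L₇" => (Fin 7 → ℤ) ≃ₗ[ℤ] (Fin 7 → ℤ)

lemma exists_eq_single_of_sum_mul_self_eq_one {ι : Type*} [Fintype ι] [DecidableEq ι]
    {x : ι → ℤ} (hx : ∑ i, x i * x i = 1) : ∃ (j : ι) (u : ℤˣ), x = Pi.single j (u : ℤ) := by
  obtain ⟨j, hj⟩ : ∃ j, x j ≠ 0 := by
    by_contra! h0
    simp [h0] at hx
  rw [← Finset.add_sum_erase _ _ (Finset.mem_univ j)] at hx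
  have hrest : 0 ≤ ∑ i ∈ Finset.univ.erase j, x i * x i :=
    Finset.sum_nonneg fun i _ => mul_self_nonneg (x i)
  have hxj : 0 < x j * x j := mul_self_pos.mpr hj
  have hxj1 : x j * x j = 1 := by omega
  have hzero : ∀ i ≠ j, x i = 0 := fun i hi => mul_self_eq_zero.mp <|
    (Finset.sum_eq_zero_iff_of_nonneg fun i _ => mul_self_nonneg (x i)).mp (by omega) i
      (Finset.mem_erase.mpr ⟨hi, Finset.mem_univ i⟩)
  obtain ⟨u, hu⟩ := IsUnit.of_mul_eq_one _ hxj1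
  refine ⟨j, u, funext fun i => ?_⟩
  rcases eq_or_ne i j with rfl | hi
  · simp [hu]
  · simp [hi, hzero i hi]

lemma dot_single_left (k : Fin 7) (c : ℤ) (y : Fin 7 → ℤ) : dot (Pi.single k c) y = c * y k := by
  simp [dot, Pi.single_apply]

lemma dot_sgnPerm (σ : Equiv.Perm (Fin 7)) (ε : Fin 7 → ℤˣ) (x y : Fin 7 → ℤ) :
    dot (sgnPerm σ ε x) (sgnPerm σ ε y) = dot x y := by
  unfold dot
  rw [← Equiv.sum_comp σ (fun i => x i * y i)]
  refine Finset.sum_congr rfl fun j _ => ?_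
  change (ε j : ℤ) * x (σ j) * ((ε j : ℤ) * y (σ j)) = x (σ j) * y (σ j)
  rw [mul_mul_mul_comm, ← Units.val_mul, Int.units_mul_self, Units.val_one, one_mul]

def vecP (a b c : ℤ) : Fin 7 → ℤ := ![a, b, c, a + b + c, a + b, a + c, b + c]

lemma mem_P_iff {x : Fin 7 → ℤ} : x ∈ P ↔ ∃ a b c : ℤ, x = vecP a b c := by
  rw [P, Submodule.mem_span_triple]
  refine exists₃_congr fun a b c => ?_
  rw [eq_comm]
  constructor <;> rintro rfl <;> funext j <;> fin_cases j <;>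
    simp [vecP, p0, p1, p2, eta]

lemma mem_P_of_eq {x : Fin 7 → ℤ} (h : vecP (x 0) (x 1) (x 2) = x) : x ∈ P :=
  mem_P_iff.mpr ⟨_, _, _, h.symm⟩

lemma map_mem_P {f : L₇} (h0 : f p0 ∈ P) (h1 : f p1 ∈ P) (h2 : f p2 ∈ P) :
    ∀ p ∈ P, f p ∈ P := by
  have : P ≤ P.comap (f : (Fin 7 → ℤ) →ₗ[ℤ] (Fin 7 → ℤ)) :=
    Submodule.span_le.mpr (by simp [Set.insert_subset_iff, h0, h1, h2])
  exact fun p hp => this hp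

def w : Fin 7 → ℤ := p0 + p1 + p2

lemma w_eq : w = vecP 1 1 1 := by decide

lemma dot_vecP_self (a b c : ℤ) :
    dot (vecP a b c) (vecP a b c) = 2 * (a ^ 2 + b ^ 2 + c ^ 2 + (a + b + c) ^ 2) := by
  simp [dot, vecP, Fin.sum_univ_seven]; ring

lemma dot_vecP_w (a b c : ℤ) : dot (vecP a b c) w = 8 * (a + b + c) := by
  simp [dot, vecP, w_eq, Fin.sum_univ_seven]; ring

lemma eq_of_units_mul_column_eq : ∀ (j k : Fin 7) (u : ℤˣ),
    u * p0 k = p0 j → u * p1 k = p1 j → u * p2 k = p2 j → k = j ∧ u = 1 := by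
  decide

lemma eq_one_of_isometry_of_fixes {h : L₇} (hiso : ∀ x y, dot (h x) (h y) = dot x y)
    (h0 : h p0 = p0) (h1 : h p1 = p1) (h2 : h p2 = p2) : h = 1 := by
  refine (Pi.basisFun ℤ (Fin 7)).ext' fun j => ?_
  rw [Pi.basisFun_apply, LinearEquiv.coe_one, id]
  obtain ⟨k, u, hk⟩ := exists_eq_single_of_sum_mul_self_eq_one (x := h (Pi.single j 1))
    (by rw [← dot, hiso, dot_single_left]; simp)
  have hcol : ∀ p, h p = p → u * p k = p j := fun p hp => calc
    u * p k = dot (h (Pi.single j 1)) (h p) := by rw [hk, hp, dot_single_left]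
    _ = p j := by rw [hiso, dot_single_left, one_mul]
  obtain ⟨rfl, rfl⟩ := eq_of_units_mul_column_eq j k u (hcol p0 h0) (hcol p1 h1) (hcol p2 h2)
  simpa using hk

def autP : Subgroup L₇ where
  carrier := {f | (∀ x y, dot (f x) (f y) = dot x y) ∧ (∀ p ∈ P, f p ∈ P) ∧ (∀ p ∈ P, f.symm p ∈ P)}
  one_mem' := ⟨fun _ _ => rfl, fun _ hp => hp, fun _ hp => hp⟩
  mul_mem' := by
    rintro f g ⟨hf, hfP, hfP'⟩ ⟨hg, hgP, hgP'⟩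
    exact ⟨fun x y => (hf _ _).trans (hg x y), fun p hp => hfP _ (hgP p hp),
      fun p hp => hgP' _ (hfP' p hp)⟩
  inv_mem' := by
    rintro f ⟨hf, hfP, hfP'⟩
    refine ⟨fun x y => ?_, hfP', hfP⟩
    rw [← hf, LinearEquiv.coe_inv, LinearEquiv.apply_symm_apply, LinearEquiv.apply_symm_apply]

def gens : Set L₇ := {gneg, g1, g2, g3}

local notation "Γ" => Subgroup.closure gens

lemma gneg_mem : gneg ∈ Γ := Subgroup.subset_closure (by simp [gens])
lemma g1_mem : g1 ∈ Γ := Subgroup.subset_closure (by simp [gens])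
lemma g2_mem : g2 ∈ Γ := Subgroup.subset_closure (by simp [gens])
lemma g3_mem : g3 ∈ Γ := Subgroup.subset_closure (by simp [gens])

lemma closure_gens_le_autP : Γ ≤ autP := by
  refine (Subgroup.closure_le autP).mpr ?_
  rintro g (rfl | rfl | rfl | rfl) <;>
    exact ⟨dot_sgnPerm _ _,
      map_mem_P (mem_P_of_eq (by decide)) (mem_P_of_eq (by decide)) (mem_P_of_eq (by decide)),
      map_mem_P (f := LinearEquiv.symm _) (mem_P_of_eq (by decide)) (mem_P_of_eq (by decide))
        (mem_P_of_eq (by decide))⟩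

lemma mem_Icc_of_sq_lt {z : ℤ} (n : ℤ) (hn : 0 ≤ n) (hz : z ^ 2 < (n + 1) ^ 2) :
    z ∈ Finset.Icc (-n) n := by
  have := abs_lt_of_sq_lt_sq' hz (by omega)
  rw [Finset.mem_Icc]
  omega

lemma exists_mem_closure_apply_eq_w {v : Fin 7 → ℤ} (hv : v ∈ P) (hvv : dot v v = 24) :
    ∃ h ∈ Γ, h v = w := by
  obtain ⟨a, b, c, rfl⟩ := mem_P_iff.mp hv
  rw [dot_vecP_self] at hvv
  have orbit : ∀ a ∈ Finset.Icc (-3 : ℤ) 3, ∀ b ∈ Finset.Icc (-3 : ℤ) 3, ∀ c ∈ Finset.Icc (-3 : ℤ) 3,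
      a ^ 2 + b ^ 2 + c ^ 2 + (a + b + c) ^ 2 = 12 →
      ∃ h ∈ [1, gneg, g3, g3 * gneg, g3 * g1, g3 * g1 * gneg, g3 * g1 * g1, g3 * g1 * g1 * gneg],
        h (vecP a b c) = w := by
    decide
  have hsq := sq_nonneg (a + b + c)
  obtain ⟨h, hh, e⟩ := orbit
    a (mem_Icc_of_sq_lt 3 (by norm_num) (by nlinarith [sq_nonneg b, sq_nonneg c]))
    b (mem_Icc_of_sq_lt 3 (by norm_num) (by nlinarith [sq_nonneg a, sq_nonneg c]))
    c (mem_Icc_of_sq_lt 3 (by norm_num) (by nlinarith [sq_nonneg a, sq_nonneg b])) (by linarith)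
  refine ⟨h, ?_, e⟩
  simp only [List.mem_cons, List.not_mem_nil, or_false] at hh
  rcases hh with rfl | rfl | rfl | rfl | rfl | rfl | rfl | rfl <;>
    simp (maxDischargeDepth := 4) [gneg_mem, g1_mem, g3_mem, Subgroup.mul_mem]

lemma mem_p_of_dot_self_of_dot_w {x : Fin 7 → ℤ} (hx : x ∈ P) (hxx : dot x x = 4)
    (hxw : dot x w = 8) : x ∈ [p0, p1, p2] := by
  obtain ⟨a, b, c, rfl⟩ := mem_P_iff.mp hx
  rw [dot_vecP_self] at hxx
  rw [dot_vecP_w] at hxw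
  have roots : ∀ a ∈ Finset.Icc (-1 : ℤ) 1, ∀ b ∈ Finset.Icc (-1 : ℤ) 1, ∀ c ∈ Finset.Icc (-1 : ℤ) 1,
      a + b + c = 1 → a ^ 2 + b ^ 2 + c ^ 2 = 1 → vecP a b c ∈ [p0, p1, p2] := by
    decide
  have hsum : a + b + c = 1 := by linarith
  rw [hsum] at hxx
  exact roots
    a (mem_Icc_of_sq_lt 1 (by norm_num) (by nlinarith [sq_nonneg b, sq_nonneg c]))
    b (mem_Icc_of_sq_lt 1 (by norm_num) (by nlinarith [sq_nonneg a, sq_nonneg c]))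
    c (mem_Icc_of_sq_lt 1 (by norm_num) (by nlinarith [sq_nonneg a, sq_nonneg b])) hsum
    (by linarith)

lemma mem_closure_of_apply_w_eq {g : L₇} (hg : g ∈ autP) (hw : g w = w) : g ∈ Γ := by
  obtain ⟨hiso, hP, -⟩ := hg
  have hperm : ∀ p ∈ [p0, p1, p2], g p ∈ [p0, p1, p2] := by
    intro p hp
    have hdots : dot p p = 4 ∧ dot p w = 8 := by revert p; decide
    have hpP : p ∈ P := Submodule.subset_span (by simpa using hp)
    exact mem_p_of_dot_self_of_dot_w (hP p hpP) (by rw [hiso, hdots.1])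
      (by rw [← hw, hiso, hdots.2])
  have s3 : ∀ x ∈ [p0, p1, p2], ∀ y ∈ [p0, p1, p2], ∀ z ∈ [p0, p1, p2], x ≠ y → x ≠ z → y ≠ z →
      ∃ h ∈ [1, g1, g1 * g1, g2, g1 * g2, g2 * g1], h x = p0 ∧ h y = p1 ∧ h z = p2 := by
    decide
  obtain ⟨h, hh, e0, e1, e2⟩ := s3 _ (hperm p0 (by simp)) _ (hperm p1 (by simp)) _
    (hperm p2 (by simp)) (g.injective.ne (by decide)) (g.injective.ne (by decide))
    (g.injective.ne (by decide))
  have hhΓ : h ∈ Γ := by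
    simp only [List.mem_cons, List.not_mem_nil, or_false] at hh
    rcases hh with rfl | rfl | rfl | rfl | rfl | rfl <;>
      simp [g1_mem, g2_mem, Subgroup.mul_mem]
  have hhg : h * g = 1 := eq_one_of_isometry_of_fixes
    (fun x y => ((closure_gens_le_autP hhΓ).1 _ _).trans (hiso x y)) e0 e1 e2
  exact (mul_mem_cancel_left hhΓ).mp (hhg ▸ one_mem Γ)

/-- The group of isometries of `ℤ⁷` preserving `P` is generated by `−Id` together with
the signed permutations `(0,1,2)(4,6,5)`, `(1,2)(4,5)` and `(2,−3)(5,−6)`. -/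
theorem stmt_8 (f : (Fin 7 → ℤ) ≃ₗ[ℤ] (Fin 7 → ℤ)) :
    ((∀ x y, dot (f x) (f y) = dot x y) ∧ (∀ p ∈ P, f p ∈ P) ∧ (∀ p ∈ P, f.symm p ∈ P)) ↔
      f ∈ Subgroup.closure {gneg, g1, g2, g3} := by
  refine ⟨fun hf => ?_, fun hf => closure_gens_le_autP hf⟩
  obtain ⟨h, hh, e⟩ := exists_mem_closure_apply_eq_w (hf.2.1 w (mem_P_of_eq (by decide)))
    (by rw [hf.1]; decide)
  have hhf : h * f ∈ Γ := mem_closure_of_apply_w_eq (mul_mem (closure_gens_le_autP hh) hf) e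
  exact (mul_mem_cancel_left hh).mp hhf
end

section
/- For G = SL(2,3), the map γ : OG → OG sending x ∈ G to η₁(x)·x (extended O-linearly), where η₁ is a nontrivial degree-1 character, is an O-algebra automorphism of OG, and the induced permutation π on the irreducible characters defined by ηᵢ ∘ γ = η_{π(i)} equals (0,1,2)(4,6,5). -/
open IsLocalRing

noncomputable section

/-- The binary tetrahedral group `SL(2,3) ≅ Q₈ ⋊ C₃`. -/
abbrev Gsl : Type := Matrix.SpecialLinearGroup (Fin 2) (ZMod 3)

/-- The character table of `SL(2,3)`. -/
def tbl (O : Type*) [CommRing O] (ω : O) : Fin 7 → Fin 7 → O :=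
  ![![1, 1, 1, 1, 1, 1, 1],
    ![1, 1, 1, ω, ω^2, ω, ω^2],
    ![1, 1, 1, ω^2, ω, ω^2, ω],
    ![3, 3, -1, 0, 0, 0, 0],
    ![2, -2, 0, -ω^2, -ω, ω^2, ω],
    ![2, -2, 0, -ω, -ω^2, ω, ω^2],
    ![2, -2, 0, -1, -1, 1, 1]]

/-- Representatives `1, z, y, t, t², tz, t²z` of the conjugacy classes of `SL(2,3)`. -/
def reps (y t : Gsl) : Fin 7 → Gsl := ![1, y^2, y, t, t^2, t * y^2, t^2 * y^2]

/-!
`η₁` agrees on the class representatives with `g ↦ ω ^ ψ(g)`, where `ψ : SL(2,3) → ℤ/3` is the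
quotient map by `Q₈` normalised by `ψ(t) = 1`; both are class functions, so `η₁` is a linear
character. Twisting by a linear character `χ`, `g ↦ χ(g) g`, is an algebra endomorphism of `OG`
whose inverse is the twist by `χ⁻¹`. The identity `η₁ ηᵢ = η_{π(i)}` holds entrywise in the
character table once `ω² + ω + 1 = 0` is used.
-/

namespace MonoidAlgebra

section Twist

variable {k G : Type*} [CommSemiring k] [Monoid G]

def twist (χ : G →* k) : MonoidAlgebra k G →ₐ[k] MonoidAlgebra k G :=
  lift k (MonoidAlgebra k G) G
    { toFun g := χ g • of k G g
      map_one' := by rw [map_one, map_one, one_smul]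
      map_mul' a b := by rw [map_mul, map_mul, smul_mul_smul_comm] }

@[simp]
theorem twist_of (χ : G →* k) (g : G) : twist χ (of k G g) = χ g • of k G g :=
  lift_of _ g

theorem twist_comp_twist (χ ψ : G →* k) : (twist χ).comp (twist ψ) = twist (χ * ψ) := by
  ext g : 1
  · simp only [← of_apply, AlgHom.comp_apply, twist_of, map_smul, smul_smul, MonoidHom.mul_apply,
    mul_comm]
  · exact Subsingleton.elim _ _

theorem twist_one : twist (1 : G →* k) = AlgHom.id k (MonoidAlgebra k G) := by
  ext g : 1
  · simp [← of_apply]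
  · exact Subsingleton.elim _ _

def twistEquiv (χ : G →* kˣ) : MonoidAlgebra k G ≃ₐ[k] MonoidAlgebra k G :=
  .ofAlgHom (twist ((Units.coeHom k).comp χ)) (twist ((Units.coeHom k).comp χ⁻¹))
    (by rw [twist_comp_twist, ← MonoidHom.comp_mul, mul_inv_cancel, MonoidHom.comp_one, twist_one])
    (by rw [twist_comp_twist, ← MonoidHom.comp_mul, inv_mul_cancel, MonoidHom.comp_one, twist_one])

@[simp]
theorem twistEquiv_of (χ : G →* kˣ) (g : G) : twistEquiv χ (of k G g) = (χ g : k) • of k G g :=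
  twist_of _ g

end Twist

end MonoidAlgebra

def ZMod.powValHom {M : Type*} [Monoid M] {n : ℕ} [NeZero n] {ω : M} (hω : ω ^ n = 1) :
    Multiplicative (ZMod n) →* M where
  toFun a := ω ^ a.toAdd.val
  map_one' := by simp
  map_mul' a b := by rw [toAdd_mul, ZMod.val_add, ← pow_eq_pow_mod _ hω, pow_add]

theorem eq_of_isConj_reps {G α ι : Type*} [Monoid G] {f g : G → α} {r : ι → G}
    (hf : ∀ a b, IsConj a b → f a = f b) (hg : ∀ a b, IsConj a b → g a = g b)
    (hr : ∀ a, ∃ j, IsConj (r j) a) (h : ∀ j, f (r j) = g (r j)) : f = g := by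
  funext a
  obtain ⟨j, hj⟩ := hr a
  rw [← hf _ _ hj, ← hg _ _ hj, h]

theorem tbl_one_mul {O : Type*} [CommRing O] {ω : O} (hω : ω ^ 2 + ω + 1 = 0) (i j : Fin 7) :
    tbl O ω 1 j * tbl O ω i j = tbl O ω (![1, 2, 0, 3, 6, 4, 5] i) j := by
  fin_cases i <;> fin_cases j <;>
    simp only [tbl, Fin.zero_eta, Fin.mk_one, Fin.reduceFinMk, Fin.isValue, Matrix.cons_val,
      Matrix.cons_val', Matrix.cons_val_fin_one, Matrix.cons_val_one, Matrix.cons_val_zero] <;>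
    grind

-- `SL(2,3) / Q₈ ≅ ℤ/3`, where `Q₈ = {g | g ^ 4 = 1}` and the coset of `!![1, 1; 0, 1]` maps to `1`.
def Gsl.toZMod3 : Gsl →* Multiplicative (ZMod 3) where
  toFun g := .ofAdd <|
    if g.1 ^ 4 = 1 then 0 else if (!![1, -1; 0, 1] * g.1) ^ 4 = 1 then 1 else 2
  map_one' := by decide
  map_mul' := by decide

theorem Gsl.toZMod3_eq_one_iff (g : Gsl) : Gsl.toZMod3 g = 1 ↔ g ^ 4 = 1 := by
  revert g
  decide

theorem Gsl.exists_monoidHom_zmod3 {y t : Gsl} (hy : y ^ 4 = 1) (ht : t ^ 3 = 1) (ht1 : t ≠ 1) :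
    ∃ ψ : Gsl →* Multiplicative (ZMod 3), ψ y = 1 ∧ ψ t = .ofAdd 1 := by
  have hψy : toZMod3 y = 1 := (toZMod3_eq_one_iff y).2 hy
  have hψt : toZMod3 t ≠ 1 := by
    rwa [Ne, toZMod3_eq_one_iff, pow_succ, ht, one_mul]
  have generator : ∀ k : Multiplicative (ZMod 3), k ≠ 1 → k = .ofAdd 1 ∨ k⁻¹ = .ofAdd 1 := by
    decide
  rcases generator _ hψt with h | h
  · exact ⟨toZMod3, hψy, h⟩
  · exact ⟨toZMod3⁻¹, by simp [hψy], h⟩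

theorem Gsl.exists_monoidHom_tbl_one {O : Type*} [CommRing O] {ω : O} (hω : ω ^ 3 = 1)
    {y t : Gsl} (hy : y ^ 4 = 1) (ht : t ^ 3 = 1) (ht1 : t ≠ 1) :
    ∃ χ : Gsl →* O, ∀ j, χ (reps y t j) = tbl O ω 1 j := by
  obtain ⟨ψ, hψy, hψt⟩ := exists_monoidHom_zmod3 hy ht ht1
  set χ := (ZMod.powValHom hω).comp ψ
  have hχy : χ y = 1 := by simp [χ, hψy]
  have hχt : χ t = ω := by simp [χ, hψt, ZMod.powValHom, ZMod.val_one]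
  refine ⟨χ, fun j => ?_⟩
  fin_cases j <;> simp [reps, tbl, hχy, hχt]

theorem stmt_10_general (O : Type*) [CommRing O]
    (ω : O) (hω : ω ^ 2 + ω + 1 = 0)
    (y t : Gsl) (hy : orderOf y = 4) (ht : orderOf t = 3)
    (η : Fin 7 → Gsl → O)
    (hclass : ∀ i (g h : Gsl), IsConj g h → η i g = η i h)
    (hval : ∀ i j, η i (reps y t j) = tbl O ω i j)
    (hfull : ∀ g : Gsl, ∃ j, IsConj (reps y t j) g) :
    (∃ Γ : MonoidAlgebra O Gsl ≃ₐ[O] MonoidAlgebra O Gsl,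
      ∀ x : Gsl, Γ (MonoidAlgebra.of O Gsl x) = η 1 x • MonoidAlgebra.of O Gsl x) ∧
    (∀ i (x : Gsl), η 1 x * η i x = η (![1, 2, 0, 3, 6, 4, 5] i) x) := by
  have hω3 : ω ^ 3 = 1 := by linear_combination (ω - 1) * hω
  have hy4 : y ^ 4 = 1 := orderOf_dvd_iff_pow_eq_one.1 (dvd_of_eq hy)
  have ht3 : t ^ 3 = 1 := orderOf_dvd_iff_pow_eq_one.1 (dvd_of_eq ht)
  have ht1 : t ≠ 1 := by rintro rfl; simp at ht
  obtain ⟨χ, hχ⟩ := Gsl.exists_monoidHom_tbl_one hω3 hy4 ht3 ht1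
  have hη : η 1 = χ := eq_of_isConj_reps (hclass 1)
    (fun a b hab => isConj_iff_eq.1 (χ.map_isConj hab)) hfull fun j => (hval 1 j).trans (hχ j).symm
  refine ⟨⟨MonoidAlgebra.twistEquiv χ.toHomUnits, fun x => by
    rw [MonoidAlgebra.twistEquiv_of, MonoidHom.coe_toHomUnits, hη]⟩, fun i => ?_⟩
  refine congrFun (eq_of_isConj_reps (fun a b hab => ?_) (hclass _) hfull fun j => ?_)
  · rw [hclass 1 a b hab, hclass i a b hab]
  · rw [hval, hval, hval, tbl_one_mul hω]

/-- The map `γ : OG → OG`, `x ↦ η₁(x)·x` (for `x ∈ G`, extended `O`-linearly), is an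
`O`-algebra automorphism of `OG`, and the induced permutation `π` on the irreducible
characters, defined by `ηᵢ ∘ γ = η_{π(i)}`, equals `(0,1,2)(4,6,5)`
(i.e. `π = ![1,2,0,3,6,4,5]`). -/
theorem stmt_10 (O : Type*) [CommRing O] [IsDomain O] [IsDiscreteValuationRing O]
    [CharZero O] [IsAdicComplete (maximalIdeal O) O] (h2 : ¬ IsUnit (2 : O))
    (ω : O) (hω : ω ^ 2 + ω + 1 = 0)
    (y t : Gsl) (hy : orderOf y = 4) (ht : orderOf t = 3)
    (η : Fin 7 → Gsl → O)
    (hclass : ∀ i (g h : Gsl), IsConj g h → η i g = η i h)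
    (hval : ∀ i j, η i (reps y t j) = tbl O ω i j)
    (hfull : ∀ g : Gsl, ∃ j, IsConj (reps y t j) g) :
    (∃ Γ : MonoidAlgebra O Gsl ≃ₐ[O] MonoidAlgebra O Gsl,
      ∀ x : Gsl, Γ (MonoidAlgebra.of O Gsl x) = η 1 x • MonoidAlgebra.of O Gsl x) ∧
    (∀ i (x : Gsl), η 1 x * η i x = η (![1, 2, 0, 3, 6, 4, 5] i) x) :=
  stmt_10_general O ω hω y t hy ht η hclass hval hfull

end
end

section
/- Let A = O[SL(2,3)] where O is a complete DVR with residue field of characteristic 2 and fraction field K large enough to split A, and let e(χᵢ) ∈ K⊗A be the central primitive idempotents corresponding to the irreducible characters χ₀,...,χ₆ (labeled per the character table, degrees 1,1,1,3,2,2,2). Then s = 2e(χ₄)+2e(χ₅)+2e(χ₆), z₀ = 4e(χ₂)+4e(χ₃)+2e(χ₄), z₁ = 4e(χ₁)+4e(χ₃)+2e(χ₅), and z₂ = 4e(χ₀)+4e(χ₃)+2e(χ₆) all lie in A (equivalently in Z(A)). -/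
/-!
Since `2` is not a unit of the local ring `O`, `3 = 1 + 2` is, and the root `ω` of the monic
polynomial `X² + X + 1` lies in the integrally closed ring `O`. The coefficient of `e(χ)` at `g` is
`χ(1) χ(g⁻¹) / 24`, so on each conjugacy class the coefficients of `s, z₀, z₁, z₂` are read off the
character table; using `ω² + ω + 1 = 0` they all lie in `ℤ[ω, 1/3] ⊆ O`.
-/

open IsLocalRing

noncomputable section

/-- The central primitive idempotent `e(χ) = (χ(1)/|G|) ∑_{x∈G} χ(x⁻¹) x` of `KG`. -/
def cIdem (K : Type*) [Field K] (χ : Gsl → K) : MonoidAlgebra K Gsl :=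
  (χ 1 / (Fintype.card Gsl : K)) • ∑ x : Gsl, MonoidAlgebra.single x (χ x⁻¹)

lemma IsLocalRing.isUnit_three_of_not_isUnit_two {R : Type*} [CommRing R] [IsLocalRing R]
    (h2 : ¬ IsUnit (2 : R)) : IsUnit (3 : R) :=
  (isUnit_or_isUnit_of_add_one (a := 3) (b := -2) (by norm_num)).resolve_right
    (by rwa [IsUnit.neg_iff])

lemma IsIntegrallyClosed.exists_algebraMap_eq_of_sq_add_self_add_one {R K : Type*} [CommRing R]
    [IsDomain R] [IsIntegrallyClosed R] [Field K] [Algebra R K] [IsFractionRing R K] {ω : K}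
    (hω : ω ^ 2 + ω + 1 = 0) : ∃ w : R, w ^ 2 + w + 1 = 0 ∧ algebraMap R K w = ω := by
  obtain ⟨w, rfl⟩ := (isIntegral_iff (R := R)).mp
    ⟨Polynomial.X ^ 2 + Polynomial.X + 1, by monicity!, by simpa using hω⟩
  refine ⟨w, IsFractionRing.injective R K ?_, rfl⟩
  simpa using hω

lemma MonoidAlgebra.coeff_sum_single_inv {K G : Type*} [Semiring K] [Group G] [Fintype G]
    (χ : G → K) (g : G) : (∑ x : G, MonoidAlgebra.single x (χ x⁻¹)).coeff g = χ g⁻¹ := by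
  classical
  simp [Finsupp.single_apply]

lemma cIdem_coeff {K : Type*} [Field K] (χ : Gsl → K) (g : Gsl) :
    (cIdem K χ).coeff g = χ 1 / 24 * χ g⁻¹ := by
  rw [cIdem, MonoidAlgebra.coeff_smul_apply, MonoidAlgebra.coeff_sum_single_inv, smul_eq_mul,
    show Fintype.card Gsl = 24 by decide]
  norm_num

/-- The coefficient of `e(χₘ)` at the elements of the `j`-th conjugacy class. -/
def idemCoeff (K : Type*) [Field K] (ω : K) (m j : Fin 7) : K :=
  tbl K ω m 0 / 24 * tbl K ω m j

lemma cIdem_coeff_eq_idemCoeff {K : Type*} [Field K] {ω : K} {y t : Gsl}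
    {η : Fin 7 → Gsl → K} (hclass : ∀ i (g h : Gsl), IsConj g h → η i g = η i h)
    (hval : ∀ i j, η i (reps y t j) = tbl K ω i j) (hfull : ∀ g : Gsl, ∃ j, IsConj (reps y t j) g)
    (g : Gsl) : ∃ j, ∀ m, (cIdem K (η m)).coeff g = idemCoeff K ω m j := by
  obtain ⟨j, hj⟩ := hfull g⁻¹
  refine ⟨j, fun m => ?_⟩
  rw [cIdem_coeff, idemCoeff, ← hval m 0, ← hval m j, hclass m _ _ hj]
  rfl

lemma idemCoeff_combinations {O K : Type*} [CommRing O] [Field K] [Algebra O K]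
    (h2 : (2 : K) ≠ 0) {w c : O} (hw : w ^ 2 + w + 1 = 0) (hc : 3 * c = 1) (j : Fin 7) :
    let ω := algebraMap O K w
    2 * idemCoeff K ω 4 j + 2 * idemCoeff K ω 5 j + 2 * idemCoeff K ω 6 j =
        algebraMap O K (![1, -1, 0, 0, 0, 0, 0] j) ∧
      4 * idemCoeff K ω 2 j + 4 * idemCoeff K ω 3 j + 2 * idemCoeff K ω 4 j =
        algebraMap O K (![2, 4 * c, -c, 0, 0, w ^ 2 * c, w * c] j) ∧
      4 * idemCoeff K ω 1 j + 4 * idemCoeff K ω 3 j + 2 * idemCoeff K ω 5 j =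
        algebraMap O K (![2, 4 * c, -c, 0, 0, w * c, w ^ 2 * c] j) ∧
      4 * idemCoeff K ω 0 j + 4 * idemCoeff K ω 3 j + 2 * idemCoeff K ω 6 j =
        algebraMap O K (![2, 4 * c, -c, 0, 0, c, c] j) := by
  have hωK := congrArg (algebraMap O K) hw
  have hcK := congrArg (algebraMap O K) hc
  simp only [map_add, map_pow, map_one, map_zero, map_mul, map_ofNat] at hωK hcK
  have h24 : (24 : K) ≠ 0 := by
    have h3 : (3 : K) ≠ 0 := left_ne_zero_of_mul_eq_one hcK
    rw [show (24 : K) = 2 * 2 * 2 * 3 by norm_num]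
    positivity
  refine ⟨?_, ?_, ?_, ?_⟩ <;> fin_cases j <;>
    simp only [idemCoeff, tbl, Fin.reduceFinMk, Matrix.cons_val, Matrix.cons_val_zero,
      Matrix.cons_val_one, map_zero, map_one, map_ofNat, map_neg, map_mul, map_pow] <;>
    grind

theorem stmt_12_general (O : Type*) [CommRing O] [IsDomain O] [IsDiscreteValuationRing O]
    [CharZero O] (h2 : ¬ IsUnit (2 : O))
    (ω : FractionRing O) (hω : ω ^ 2 + ω + 1 = 0)
    (y t : Gsl)
    (η : Fin 7 → Gsl → FractionRing O)
    (hclass : ∀ i (g h : Gsl), IsConj g h → η i g = η i h)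
    (hval : ∀ i j, η i (reps y t j) = tbl (FractionRing O) ω i j)
    (hfull : ∀ g : Gsl, ∃ j, IsConj (reps y t j) g) :
    let K := FractionRing O
    let E : Fin 7 → MonoidAlgebra K Gsl := fun m => cIdem K (η m)
    (∀ g : Gsl, ((2 : K) • E 4 + (2 : K) • E 5 + (2 : K) • E 6).coeff g ∈
        (algebraMap O K).range) ∧
    (∀ g : Gsl, ((4 : K) • E 2 + (4 : K) • E 3 + (2 : K) • E 4).coeff g ∈
        (algebraMap O K).range) ∧
    (∀ g : Gsl, ((4 : K) • E 1 + (4 : K) • E 3 + (2 : K) • E 5).coeff g ∈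
        (algebraMap O K).range) ∧
    (∀ g : Gsl, ((4 : K) • E 0 + (4 : K) • E 3 + (2 : K) • E 6).coeff g ∈
        (algebraMap O K).range) := by
  intro K E
  obtain ⟨c, hc⟩ := (IsLocalRing.isUnit_three_of_not_isUnit_two h2).exists_right_inv
  obtain ⟨w, hw, rfl⟩ := IsIntegrallyClosed.exists_algebraMap_eq_of_sq_add_self_add_one (R := O) hω
  have hE : ∀ g, ∃ j, ∀ m, (E m).coeff g = idemCoeff K (algebraMap O K w) m j :=
    cIdem_coeff_eq_idemCoeff hclass hval hfull
  refine ⟨fun g => ?_, fun g => ?_, fun g => ?_, fun g => ?_⟩ <;>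
    obtain ⟨j, hj⟩ := hE g <;>
    obtain ⟨hs, hz₀, hz₁, hz₂⟩ := idemCoeff_combinations (K := K) two_ne_zero hw hc j <;>
    simp only [MonoidAlgebra.coeff_add, MonoidAlgebra.coeff_smul_apply, Finsupp.add_apply,
      smul_eq_mul, hj]
  exacts [⟨_, hs.symm⟩, ⟨_, hz₀.symm⟩, ⟨_, hz₁.symm⟩, ⟨_, hz₂.symm⟩]

/-- The elements `s = 2e(χ₄)+2e(χ₅)+2e(χ₆)`, `z₀ = 4e(χ₂)+4e(χ₃)+2e(χ₄)`,
`z₁ = 4e(χ₁)+4e(χ₃)+2e(χ₅)` and `z₂ = 4e(χ₀)+4e(χ₃)+2e(χ₆)` of `K ⊗ A = K[SL(2,3)]`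
all lie in `A = O[SL(2,3)]`, i.e. all their coefficients lie in `O`. -/
theorem stmt_12 (O : Type*) [CommRing O] [IsDomain O] [IsDiscreteValuationRing O]
    [CharZero O] [IsAdicComplete (maximalIdeal O) O] (h2 : ¬ IsUnit (2 : O))
    (ω : FractionRing O) (hω : ω ^ 2 + ω + 1 = 0)
    (y t : Gsl) (hy : orderOf y = 4) (ht : orderOf t = 3)
    (η : Fin 7 → Gsl → FractionRing O)
    (hclass : ∀ i (g h : Gsl), IsConj g h → η i g = η i h)
    (hval : ∀ i j, η i (reps y t j) = tbl (FractionRing O) ω i j)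
    (hfull : ∀ g : Gsl, ∃ j, IsConj (reps y t j) g) :
    let K := FractionRing O
    let E : Fin 7 → MonoidAlgebra K Gsl := fun m => cIdem K (η m)
    (∀ g : Gsl, ((2 : K) • E 4 + (2 : K) • E 5 + (2 : K) • E 6).coeff g ∈
        (algebraMap O K).range) ∧
    (∀ g : Gsl, ((4 : K) • E 2 + (4 : K) • E 3 + (2 : K) • E 4).coeff g ∈
        (algebraMap O K).range) ∧
    (∀ g : Gsl, ((4 : K) • E 1 + (4 : K) • E 3 + (2 : K) • E 5).coeff g ∈
        (algebraMap O K).range) ∧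
    (∀ g : Gsl, ((4 : K) • E 0 + (4 : K) • E 3 + (2 : K) • E 6).coeff g ∈
        (algebraMap O K).range) :=
  stmt_12_general O h2 ω hω y t η hclass hval hfull

end
end

section
/- The quotient k-algebra k[X,Y]/(X² − Y², XY) is a 4-dimensional local symmetric k-algebra with basis {1, X, Y, X²}, where k is a field of characteristic 2. -/
/-!
The classes of `1, X, Y, X²` span the quotient because every monomial of degree three vanishes
modulo `X² − Y²` and `XY`; they are linearly independent because the coefficients of `1, X, Y`
and the sum of the coefficients of `X²` and `Y²` vanish on the ideal. Hence every element is a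
scalar plus `x u + y v`, and `(x u + y v)³ = 0`, so the algebra is local. Taking the coefficient
of `x²` of a product gives a symmetric associative form whose Gram matrix in the basis
`1, x, y, x²` is the permutation matrix of the transposition `(0 3)`, so it is nondegenerate.
-/

open MvPolynomial

section SquareRelations

variable {A : Type*} [CommRing A] {x y : A}

theorem pow_three_eq_zero_of_sq_eq_sq_of_mul_eq_zero (hsq : x ^ 2 = y ^ 2) (hxy : x * y = 0) :
    x ^ 3 = 0 := by
  linear_combination x * hsq + y * hxy

theorem add_mul_pow_three_eq_zero (hsq : x ^ 2 = y ^ 2) (hxy : x * y = 0) (u v : A) :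
    (x * u + y * v) ^ 3 = 0 := by
  linear_combination (u ^ 3 * x - v ^ 3 * y) * hsq
    + (u ^ 3 * y + 3 * x * u ^ 2 * v + 3 * y * u * v ^ 2 + v ^ 3 * x) * hxy

end SquareRelations

theorem IsLocalRing.of_forall_exists_algebraMap_add_isNilpotent {k A : Type*} [Field k]
    [CommRing A] [Nontrivial A] [Algebra k A]
    (h : ∀ a : A, ∃ c : k, ∃ n : A, IsNilpotent n ∧ a = algebraMap k A c + n) :
    IsLocalRing A := by
  refine .of_isUnit_or_isUnit_one_sub_self fun a => ?_
  obtain ⟨c, n, hn, rfl⟩ := h a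
  by_cases hc : c = 0
  · right
    simpa [hc] using hn.isUnit_one_sub
  · left
    exact hn.isUnit_add_left_of_commute ((Ne.isUnit hc).map _) (Commute.all _ _)

noncomputable section

namespace XYQuotient

variable (k : Type*) [CommRing k]

abbrev relations : Ideal (MvPolynomial (Fin 2) k) := Ideal.span {X 0 ^ 2 - X 1 ^ 2, X 0 * X 1}

abbrev Alg := MvPolynomial (Fin 2) k ⧸ relations k

def x : Alg k := Ideal.Quotient.mk _ (X 0)

def y : Alg k := Ideal.Quotient.mk _ (X 1)

theorem x_sq_eq_y_sq : x k ^ 2 = y k ^ 2 := by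
  rw [x, y, ← map_pow, ← map_pow, Ideal.Quotient.eq]
  exact Ideal.subset_span (by simp)

theorem x_mul_y : x k * y k = 0 := by
  rw [x, y, ← map_mul, Ideal.Quotient.eq_zero_iff_mem]
  exact Ideal.subset_span (by simp)

theorem x_sq_mul_y : x k ^ 2 * y k = 0 := by
  rw [sq, mul_assoc, x_mul_y, mul_zero]

theorem x_pow_three : x k ^ 3 = 0 :=
  pow_three_eq_zero_of_sq_eq_sq_of_mul_eq_zero (x_sq_eq_y_sq k) (x_mul_y k)

/-- `X²` and `Y²` are identified modulo `relations`, so only the sum of their coefficients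
descends to the quotient. -/
def coeffMap : MvPolynomial (Fin 2) k →ₗ[k] Fin 4 → k where
  toFun p := ![coeff 0 p, coeff (.single 0 1) p, coeff (.single 1 1) p,
    coeff (.single 0 2) p + coeff (.single 1 2) p]
  map_add' p q := by funext i; fin_cases i <;> simp [coeff_add]; ring
  map_smul' c p := by funext i; fin_cases i <;> simp [coeff_smul]; ring

theorem coeffMap_eq_zero_of_mem {p : MvPolynomial (Fin 2) k} (hp : p ∈ relations k) :
    coeffMap k p = 0 := by
  obtain ⟨u, v, rfl⟩ := Ideal.mem_span_pair.mp hp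
  have hXY : (X 0 * X 1 : MvPolynomial (Fin 2) k) = monomial (.single 0 1 + .single 1 1) 1 := by
    rw [X, X, monomial_mul, one_mul]
  rw [X_pow_eq_monomial, X_pow_eq_monomial, hXY]
  funext i
  fin_cases i <;>
    simp [coeffMap, mul_sub, coeff_sub, coeff_mul_monomial', Finsupp.le_def, Fin.forall_fin_two,
      Finsupp.single_apply]

def coeffMapQuot : Alg k →ₗ[k] Fin 4 → k :=
  (Submodule.liftQ ((relations k).restrictScalars k) (coeffMap k)
    fun _ => coeffMap_eq_zero_of_mem k).comp
    (Submodule.Quotient.restrictScalarsEquiv k (relations k)).symm.toLinearMap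

theorem coeffMapQuot_mk (p : MvPolynomial (Fin 2) k) :
    coeffMapQuot k (Ideal.Quotient.mk _ p) = coeffMap k p := rfl

def basisVec : Fin 4 → Alg k := ![1, x k, y k, x k ^ 2]

theorem coeffMapQuot_comp_basisVec : coeffMapQuot k ∘ basisVec k = Pi.basisFun k (Fin 4) := by
  have hmk (i) : basisVec k i = Ideal.Quotient.mk _ (![1, X 0, X 1, X 0 ^ 2] i) := by
    fin_cases i <;> simp [basisVec, x, y]
  ext i j
  rw [Function.comp_apply, hmk, coeffMapQuot_mk]
  fin_cases i <;> fin_cases j <;>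
    simp [coeffMap, coeff_one, coeff_X, coeff_X_pow, Finsupp.single_eq_single_iff,
      eq_comm (a := (0 : Fin 2 →₀ ℕ))]

theorem linearIndependent_basisVec : LinearIndependent k (basisVec k) :=
  .of_comp (coeffMapQuot k) <| by
    rw [coeffMapQuot_comp_basisVec]; exact (Pi.basisFun k (Fin 4)).linearIndependent

theorem mul_mem_span_basisVec {s : Alg k} (hs : s ∈ Submodule.span k (Set.range (basisVec k))) :
    s * x k ∈ Submodule.span k (Set.range (basisVec k)) ∧
      s * y k ∈ Submodule.span k (Set.range (basisVec k)) := by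
  set S := Submodule.span k (Set.range (basisVec k))
  have hmem (j) : basisVec k j ∈ S := Submodule.subset_span ⟨j, rfl⟩
  have hx : x k ∈ S := hmem 1
  have hy : y k ∈ S := hmem 2
  have hx2 : x k ^ 2 ∈ S := hmem 3
  induction hs using Submodule.span_induction with
  | mem z hz =>
    obtain ⟨i, rfl⟩ := hz
    fin_cases i <;>
      simp [basisVec, ← sq, ← pow_succ, ← x_sq_eq_y_sq, mul_comm (y k), x_mul_y, x_sq_mul_y,
        x_pow_three, hx, hy, hx2]
  | zero => simp
  | add a b _ _ ha hb => simpa [add_mul] using ⟨add_mem ha.1 hb.1, add_mem ha.2 hb.2⟩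
  | smul c a _ ha => simpa [smul_mul_assoc] using ⟨S.smul_mem c ha.1, S.smul_mem c ha.2⟩

theorem top_le_span_basisVec : ⊤ ≤ Submodule.span k (Set.range (basisVec k)) := by
  rintro z -
  obtain ⟨p, rfl⟩ := Ideal.Quotient.mk_surjective z
  induction p using MvPolynomial.induction_on with
  | C a =>
    rw [← Ideal.Quotient.algebraMap_eq, ← MvPolynomial.algebraMap_eq,
      ← IsScalarTower.algebraMap_apply, Algebra.algebraMap_eq_smul_one]
    exact Submodule.smul_mem _ a (Submodule.subset_span ⟨0, rfl⟩)
  | add p q hp hq => rw [map_add]; exact add_mem hp hq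
  | mul_X p i hp =>
    rw [map_mul]
    fin_cases i
    exacts [(mul_mem_span_basisVec k hp).1, (mul_mem_span_basisVec k hp).2]

def basis : Module.Basis (Fin 4) k (Alg k) :=
  .mk (linearIndependent_basisVec k) (top_le_span_basisVec k)

theorem basis_apply (i : Fin 4) : basis k i = basisVec k i := Module.Basis.mk_apply ..

/-- `Algebra.smul_def` does not rewrite here: the instance found for `Module k (Alg k)` is
`Submodule.Quotient.module'`, which is not reducibly equal to `Algebra.toModule`. -/
theorem smul_eq_algebraMap_mul (c : k) (a : Alg k) : c • a = algebraMap k _ c * a :=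
  Algebra.smul_def c a

theorem exists_eq_algebraMap_add (a : Alg k) :
    ∃ c : k, ∃ u v : Alg k, a = algebraMap k _ c + (x k * u + y k * v) := by
  have ha := (basis k).sum_repr a
  rw [Fin.sum_univ_four] at ha
  refine ⟨(basis k).repr a 0, algebraMap k _ ((basis k).repr a 1) +
    algebraMap k _ ((basis k).repr a 3) * x k, algebraMap k _ ((basis k).repr a 2), ?_⟩
  conv_lhs => rw [← ha]
  simp only [basis_apply, basisVec, Matrix.cons_val, smul_eq_algebraMap_mul]
  ring

theorem coord_three_basis_mul_basis (i j : Fin 4) :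
    (basis k).coord 3 (basis k i * basis k j) = if Equiv.swap 0 3 i = j then 1 else 0 := by
  have hcoord (j) : (basis k).repr (basisVec k j) 3 = if j = 3 then 1 else 0 := by
    rw [← basis_apply, Module.Basis.repr_self, Finsupp.single_apply]
  have h1 : (basis k).repr 1 3 = 0 := hcoord 0
  have hx : (basis k).repr (x k) 3 = 0 := hcoord 1
  have hy : (basis k).repr (y k) 3 = 0 := hcoord 2
  have hx2 : (basis k).repr (x k ^ 2) 3 = 1 := hcoord 3
  have hx4 : x k ^ 4 = 0 := pow_eq_zero_of_le (by norm_num) (x_pow_three k)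
  fin_cases i <;> fin_cases j <;>
    simp [basis_apply, basisVec, ← sq, ← pow_succ, ← pow_succ', ← pow_mul, ← x_sq_eq_y_sq,
      mul_comm (y k) (x k), mul_comm (y k) (x k ^ 2), x_mul_y, x_sq_mul_y, x_pow_three, hx4,
      h1, hx, hy, hx2, Equiv.swap_apply_of_ne_of_ne]

theorem coord_three_mul_basis (a : Alg k) (j : Fin 4) :
    (basis k).coord 3 (a * basis k j) = (basis k).repr a (Equiv.swap 0 3 j) := by
  conv_lhs => rw [← (basis k).sum_repr a]
  simp only [Finset.sum_mul, smul_mul_assoc, map_sum, map_smul, coord_three_basis_mul_basis,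
    Equiv.swap_apply_eq_iff, smul_eq_mul, mul_ite, mul_one, mul_zero, Finset.sum_ite_eq',
    Finset.mem_univ, if_true]

def frobeniusForm : Alg k →ₗ[k] Alg k →ₗ[k] k :=
  (LinearMap.mul k (Alg k)).compr₂ ((basis k).coord 3)

theorem frobeniusForm_apply (a b : Alg k) : frobeniusForm k a b = (basis k).coord 3 (a * b) :=
  rfl

theorem frobeniusForm_comm (a b : Alg k) : frobeniusForm k a b = frobeniusForm k b a := by
  rw [frobeniusForm_apply, frobeniusForm_apply, mul_comm]

theorem frobeniusForm_mul (a b c : Alg k) :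
    frobeniusForm k (a * b) c = frobeniusForm k a (b * c) := by
  rw [frobeniusForm_apply, frobeniusForm_apply, mul_assoc]

theorem eq_zero_of_frobeniusForm_eq_zero {a : Alg k} (h : ∀ b, frobeniusForm k a b = 0) :
    a = 0 :=
  (basis k).forall_coord_eq_zero_iff.mp fun i => by
    have hi := h (basis k (Equiv.swap 0 3 i))
    rwa [frobeniusForm_apply, coord_three_mul_basis, Equiv.swap_apply_self] at hi

theorem isLocalRing (k : Type*) [Field k] : IsLocalRing (Alg k) := by
  have : Nontrivial (Alg k) :=
    ⟨1, 0, by simpa [basis_apply, basisVec] using (basis k).ne_zero 0⟩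
  refine .of_forall_exists_algebraMap_add_isNilpotent (k := k) fun a => ?_
  obtain ⟨c, u, v, rfl⟩ := exists_eq_algebraMap_add k a
  exact ⟨c, _, ⟨3, add_mul_pow_three_eq_zero (x_sq_eq_y_sq k) (x_mul_y k) u v⟩, rfl⟩

end XYQuotient

end

theorem stmt_16_general (k : Type*) [Field k] :
    let R := MvPolynomial (Fin 2) k ⧸
      Ideal.span {(X 0 : MvPolynomial (Fin 2) k) ^ 2 - X 1 ^ 2, X 0 * X 1}
    let x : R := Ideal.Quotient.mk _ (X 0)
    let y : R := Ideal.Quotient.mk _ (X 1)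
    (∃ b : Module.Basis (Fin 4) k R, b 0 = 1 ∧ b 1 = x ∧ b 2 = y ∧ b 3 = x ^ 2) ∧
    IsLocalRing R ∧
    (∃ B : R →ₗ[k] R →ₗ[k] k,
      (∀ a b, B a b = B b a) ∧ (∀ a b c, B (a * b) c = B a (b * c)) ∧
      (∀ a, (∀ b, B a b = 0) → a = 0)) := by
  intro R x y
  refine ⟨⟨XYQuotient.basis k, XYQuotient.basis_apply k 0, XYQuotient.basis_apply k 1,
    XYQuotient.basis_apply k 2, XYQuotient.basis_apply k 3⟩, XYQuotient.isLocalRing k,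
    XYQuotient.frobeniusForm k, XYQuotient.frobeniusForm_comm k,
    XYQuotient.frobeniusForm_mul k, fun _ => XYQuotient.eq_zero_of_frobeniusForm_eq_zero k⟩

/-- `k[X,Y]/(X² − Y², XY)` for a field `k` of characteristic 2 is a 4-dimensional local
symmetric `k`-algebra with basis `{1, X, Y, X²}`. -/
theorem stmt_16 (k : Type*) [Field k] [CharP k 2] :
    let R := MvPolynomial (Fin 2) k ⧸
      Ideal.span {(X 0 : MvPolynomial (Fin 2) k) ^ 2 - X 1 ^ 2, X 0 * X 1}
    let x : R := Ideal.Quotient.mk _ (X 0)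
    let y : R := Ideal.Quotient.mk _ (X 1)
    (∃ b : Module.Basis (Fin 4) k R, b 0 = 1 ∧ b 1 = x ∧ b 2 = y ∧ b 3 = x ^ 2) ∧
    IsLocalRing R ∧
    (∃ B : R →ₗ[k] R →ₗ[k] k,
      (∀ a b, B a b = B b a) ∧ (∀ a b c, B (a * b) c = B a (b * c)) ∧
      (∀ a, (∀ b, B a b = 0) → a = 0)) :=
  stmt_16_general k
end

section
/- Let O be a complete DVR of mixed characteristic (0,2). The O-algebra O[X,Y]/(X² − Y² − 2(X−Y), XY − 2X² + 4X) is a free O-module of rank 4, commutative and local, and its reduction modulo the maximal ideal of O is isomorphic to k[X,Y]/(X² − Y², XY). -/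
/-!
The relations read `y² = x² - 2x + 2y` and `xy = 2x² - 4x`; since `3` is a unit in `O` they
also give `x³ = 6x² - 8x`, so `1, x, y, x²` span the algebra over `O`. They are linearly independent
because the algebra has the four `O`-points `(0,0), (0,2), (2,0), (4,4)`, at which the values of
`1, x, y, x²` form a matrix whose determinant is a nonzero power of `2`. The algebra is finite,
hence integral, over `O`, so every maximal ideal contains `2`; modulo `2` we have `x² = y²` and
`xy = 0`, so `x³ = 0 = y³` and every maximal ideal contains `x` and `y`, hence contains, and so
equals, the kernel of evaluation at `(0,0)` into the residue field. Reducing modulo `𝔪` kills the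
multiples of `2` in the relations, which yields the special fibre.
-/

open MvPolynomial IsLocalRing

namespace MvPolynomial

variable {σ O : Type*} [CommRing O]

theorem quotientEquivQuotientMvPolynomial_symm_mk (m : Ideal O) (p : MvPolynomial σ O) :
    (quotientEquivQuotientMvPolynomial m).symm (Ideal.Quotient.mk (Ideal.map C m) p) =
      map (Ideal.Quotient.mk m) p := by
  rw [AlgEquiv.symm_apply_eq]
  induction p using MvPolynomial.induction_on <;> simp_all [quotientEquivQuotientMvPolynomial]

theorem two_eq_zero_of_mem {m : Ideal O} (h2 : (2 : O) ∈ m) :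
    (2 : MvPolynomial σ (O ⧸ m)) = 0 := by
  rw [← map_ofNat C, ← map_ofNat (Ideal.Quotient.mk m), Ideal.Quotient.eq_zero_iff_mem.2 h2,
    map_zero]

noncomputable def quotientSpanModIdealEquiv (s : Set (MvPolynomial σ O)) (m : Ideal O) :
    (MvPolynomial σ O ⧸ Ideal.span s) ⧸
        m.map (algebraMap O (MvPolynomial σ O ⧸ Ideal.span s)) ≃+*
      MvPolynomial σ (O ⧸ m) ⧸ Ideal.span (map (Ideal.Quotient.mk m) '' s) :=
  (Ideal.quotEquivOfEq (by
      rw [IsScalarTower.algebraMap_eq O (MvPolynomial σ O), ← Ideal.map_map]; rfl)).trans <|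
    (DoubleQuot.quotQuotEquivComm _ _).trans <|
      Ideal.quotientEquiv _ _ (quotientEquivQuotientMvPolynomial m).symm.toRingEquiv <| by
        rw [Ideal.map_map, Ideal.map_span]
        congr 1
        exact Set.image_congr fun p _ => (quotientEquivQuotientMvPolynomial_symm_mk m p).symm

end MvPolynomial

theorem isUnit_three_of_two_mem_maximalIdeal {O : Type*} [CommRing O] [IsLocalRing O]
    (h2 : (2 : O) ∈ maximalIdeal O) : IsUnit (3 : O) := by
  have h : ¬IsUnit (-2 : O) := by rwa [IsUnit.neg_iff]
  simpa [h, show (1 : O) - -2 = 3 by norm_num] using isUnit_or_isUnit_one_sub_self (-2 : O)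

theorem IsLocalRing.algebraMap_mem_of_isMaximal {O A : Type*} [CommRing O] [IsLocalRing O]
    [CommRing A] [Algebra O A] [Algebra.IsIntegral O A] (M : Ideal A) [M.IsMaximal] {a : O}
    (ha : a ∈ maximalIdeal O) : algebraMap O A a ∈ M := by
  rwa [← eq_maximalIdeal (Ideal.IsMaximal.under O M)] at ha

theorem Submodule.mul_mem_span_range {ι R A : Type*} [CommSemiring R] [Semiring A] [Algebra R A]
    {v : ι → A} {a : A} (h : ∀ i, v i * a ∈ span R (Set.range v)) {r : A}
    (hr : r ∈ span R (Set.range v)) : r * a ∈ span R (Set.range v) :=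
  span_le (p := (span R (Set.range v)).comap (LinearMap.mulRight R a)).2
    (Set.range_subset_iff.2 h) hr

noncomputable section

namespace SL23

variable (O : Type*) [CommRing O]

def rel₁ : MvPolynomial (Fin 2) O := X 0 ^ 2 - X 1 ^ 2 - 2 * (X 0 - X 1)

def rel₂ : MvPolynomial (Fin 2) O := X 0 * X 1 - 2 * X 0 ^ 2 + 4 * X 0

/-- The corner algebra `e₀ O[SL(2,3)] e₀`, with `x = z₀e₀` and `y = z₁e₀`. -/
abbrev Corner : Type _ := MvPolynomial (Fin 2) O ⧸ Ideal.span {rel₁ O, rel₂ O}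

variable {O}

def x : Corner O := Ideal.Quotient.mk _ (X 0)

def y : Corner O := Ideal.Quotient.mk _ (X 1)

def basisVec : Fin 4 → Corner O := ![1, x, y, x ^ 2]

theorem aeval_xy_eq_zero {p : MvPolynomial (Fin 2) O} (hp : p ∈ ({rel₁ O, rel₂ O} : Set _)) :
    aeval ![(x : Corner O), y] p = 0 := by
  have : aeval ![(x : Corner O), y] = Ideal.Quotient.mkₐ O (Ideal.span {rel₁ O, rel₂ O}) := by
    ext i
    fin_cases i <;> simp [x, y]
  rw [this, Ideal.Quotient.mkₐ_eq_mk, Ideal.Quotient.eq_zero_iff_mem]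
  exact Ideal.subset_span hp

theorem y_sq : y ^ 2 = x ^ 2 - 2 * x + 2 * (y : Corner O) := by
  have h := aeval_xy_eq_zero (O := O) (p := rel₁ O) (by simp)
  simp only [rel₁, map_sub, map_mul, map_pow, map_ofNat, aeval_X, Matrix.cons_val_zero,
    Matrix.cons_val_one] at h
  linear_combination -h

theorem x_mul_y : x * y = 2 * x ^ 2 - 4 * (x : Corner O) := by
  have h := aeval_xy_eq_zero (O := O) (p := rel₂ O) (by simp)
  simp only [rel₂, map_add, map_sub, map_mul, map_pow, map_ofNat, aeval_X, Matrix.cons_val_zero,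
    Matrix.cons_val_one] at h
  linear_combination h

theorem x_cube (h3 : IsUnit (3 : O)) : x ^ 3 = 6 * x ^ 2 - 8 * (x : Corner O) := by
  have h3' : IsUnit (3 : Corner O) := by
    simpa only [map_ofNat] using h3.map (algebraMap O (Corner O))
  have h : 3 * (x ^ 3 - 6 * x ^ 2 + 8 * x) = 3 * (0 : Corner O) := by
    linear_combination x * y_sq (O := O) + (6 - y - 2 * x) * x_mul_y (O := O)
  linear_combination h3'.mul_left_cancel h

theorem x_sq_mul_y (h3 : IsUnit (3 : O)) : x ^ 2 * y = 8 * x ^ 2 - 16 * (x : Corner O) := by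
  linear_combination x * x_mul_y (O := O) + 2 * x_cube h3

theorem x_mem_and_y_mem {P : Ideal (Corner O)} (hP : P.IsPrime) (h2 : (2 : Corner O) ∈ P) :
    x ∈ P ∧ y ∈ P := by
  have hxy : x * y ∈ P := by
    rw [x_mul_y, show (2 : Corner O) * x ^ 2 - 4 * x = 2 * (x ^ 2 - 2 * x) by ring]
    exact P.mul_mem_right _ h2
  have hdiff : y ^ 2 - x ^ 2 ∈ P := by
    rw [y_sq, show (x : Corner O) ^ 2 - 2 * x + 2 * y - x ^ 2 = 2 * (y - x) by ring]
    exact P.mul_mem_right _ h2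
  have hx : x ∈ P := hP.mem_of_pow_mem 3 <| by
    rw [show (x : Corner O) ^ 3 = y * (x * y) - x * (y ^ 2 - x ^ 2) by ring]
    exact P.sub_mem (P.mul_mem_left _ hxy) (P.mul_mem_left _ hdiff)
  refine ⟨hx, hP.mem_of_pow_mem 2 ?_⟩
  rw [show (y : Corner O) ^ 2 = (y ^ 2 - x ^ 2) + x * x by ring]
  exact P.add_mem hdiff (P.mul_mem_left _ hx)

section Evaluation

variable {S : Type*} [CommRing S] [Algebra O S] (v : Fin 2 → S)
  (h₁ : aeval v (rel₁ O) = 0) (h₂ : aeval v (rel₂ O) = 0)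

def eval : Corner O →ₐ[O] S :=
  Ideal.Quotient.liftₐ _ (aeval v) fun _ hp =>
    Ideal.span_le (I := RingHom.ker (aeval v)).2 (by simp [Set.insert_subset_iff, h₁, h₂]) hp

@[simp] theorem eval_x : eval v h₁ h₂ x = v 0 := aeval_X v 0

@[simp] theorem eval_y : eval v h₁ h₂ y = v 1 := aeval_X v 1

end Evaluation

theorem mem_span_basisVec_of_eq {r : Corner O} (a b c d : O)
    (h : r = algebraMap O _ a + algebraMap O _ b * x + algebraMap O _ c * y +
      algebraMap O _ d * x ^ 2) :
    r ∈ Submodule.span O (Set.range basisVec) :=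
  (Submodule.mem_span_range_iff_exists_fun O).2
    ⟨![a, b, c, d], by
      rw [h]
      simp [Fin.sum_univ_four, basisVec]
      simp only [← Algebra.algebraMap_eq_smul_one, ← Algebra.smul_def]⟩

theorem span_basisVec (h3 : IsUnit (3 : O)) :
    Submodule.span O (Set.range (basisVec (O := O))) = ⊤ := by
  have mul_x : ∀ i, basisVec i * x ∈ Submodule.span O (Set.range (basisVec (O := O))) := by
    intro i
    fin_cases i
    · exact mem_span_basisVec_of_eq 0 1 0 0 (by simp [basisVec])
    · exact mem_span_basisVec_of_eq 0 0 0 1 (by simp [basisVec]; ring)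
    · exact mem_span_basisVec_of_eq 0 (-4) 0 2 (by
        simp [basisVec, map_ofNat]; linear_combination x_mul_y (O := O))
    · exact mem_span_basisVec_of_eq 0 (-8) 0 6 (by
        simp [basisVec, map_ofNat]; linear_combination x_cube h3)
  have mul_y : ∀ i, basisVec i * y ∈ Submodule.span O (Set.range (basisVec (O := O))) := by
    intro i
    fin_cases i
    · exact mem_span_basisVec_of_eq 0 0 1 0 (by simp [basisVec])
    · exact mem_span_basisVec_of_eq 0 (-4) 0 2 (by
        simp [basisVec, map_ofNat]; linear_combination x_mul_y (O := O))
    · exact mem_span_basisVec_of_eq 0 (-2) 2 1 (by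
        simp [basisVec, map_ofNat]; linear_combination y_sq (O := O))
    · exact mem_span_basisVec_of_eq 0 (-16) 0 8 (by
        simp [basisVec, map_ofNat]; linear_combination x_sq_mul_y h3)
  refine Submodule.eq_top_iff'.2 fun r => ?_
  obtain ⟨p, rfl⟩ := Ideal.Quotient.mk_surjective r
  induction p using MvPolynomial.induction_on with
  | C a => exact mem_span_basisVec_of_eq a 0 0 0 (by simp; rfl)
  | add p q hp hq => rw [map_add]; exact add_mem hp hq
  | mul_X p i hp =>
    rw [map_mul]
    fin_cases i
    · exact Submodule.mul_mem_span_range mul_x hp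
    · exact Submodule.mul_mem_span_range mul_y hp

theorem linearIndependent_basisVec [IsDomain O] [CharZero O] :
    LinearIndependent O (basisVec (O := O)) := by
  rw [Fintype.linearIndependent_iff]
  intro c hc
  have at_point : ∀ p q : O, aeval ![p, q] (rel₁ O) = 0 → aeval ![p, q] (rel₂ O) = 0 →
      c 0 + c 1 * p + c 2 * q + c 3 * p ^ 2 = 0 := by
    intro p q h₁ h₂
    simpa [Fin.sum_univ_four, basisVec] using congrArg (eval ![p, q] h₁ h₂) hc
  have q₁ := at_point 0 0 (by simp [rel₁]) (by simp [rel₂])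
  have q₂ := at_point 0 2 (by simp [rel₁]; ring) (by simp [rel₂])
  have q₃ := at_point 2 0 (by simp [rel₁]; ring) (by simp [rel₂]; ring)
  have q₄ := at_point 4 4 (by simp [rel₁]) (by simp [rel₂]; ring)
  have hc₀ : c 0 = 0 := by linear_combination q₁
  have hc₂ : c 2 = 0 :=
    mul_left_cancel₀ (two_ne_zero (α := O)) (by linear_combination q₂ - q₁)
  have hc₃ : c 3 = 0 := mul_left_cancel₀ (pow_ne_zero 3 (two_ne_zero (α := O)))
    (by linear_combination q₄ - 2 * q₃ + q₁ - 4 * hc₂)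
  have hc₁ : c 1 = 0 := mul_left_cancel₀ (two_ne_zero (α := O))
    (by linear_combination q₃ - q₁ - 4 * hc₃)
  intro i
  fin_cases i <;> assumption

def basis [IsDomain O] [CharZero O] (h3 : IsUnit (3 : O)) : Module.Basis (Fin 4) O (Corner O) :=
  .mk linearIndependent_basisVec (span_basisVec h3).ge

theorem module_finite (h3 : IsUnit (3 : O)) : Module.Finite O (Corner O) :=
  .of_fg_top (span_basisVec h3 ▸ Submodule.fg_span (Set.finite_range _))

theorem isLocalRing [IsLocalRing O] (h2 : (2 : O) ∈ maximalIdeal O) :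
    IsLocalRing (Corner O) := by
  have h3 := isUnit_three_of_two_mem_maximalIdeal h2
  have : Module.Finite O (Corner O) := module_finite h3
  let χ : Corner O →ₐ[O] ResidueField O := eval 0 (by simp [rel₁]) (by simp [rel₂])
  have hχ : Function.Surjective χ := fun a ↦ by
    obtain ⟨a, rfl⟩ := residue_surjective a
    exact ⟨algebraMap O _ a, by simp [χ]⟩
  have hχM : ∀ M : Ideal (Corner O), M.IsMaximal → RingHom.ker χ ≤ M := by
    intro M hM r hr
    have hmem := fun {a : O} (ha : a ∈ maximalIdeal O) ↦ algebraMap_mem_of_isMaximal M ha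
    obtain ⟨hx, hy⟩ := x_mem_and_y_mem hM.isPrime (by simpa only [map_ofNat] using hmem h2)
    obtain ⟨c, rfl⟩ := (Submodule.mem_span_range_iff_exists_fun O).1
      ((span_basisVec h3).ge (Submodule.mem_top (x := r)))
    have hc₀ : c 0 ∈ maximalIdeal O := by
      simpa [χ, Fin.sum_univ_four, basisVec, Algebra.smul_def] using hr
    simp only [Fin.sum_univ_four, basisVec, Matrix.cons_val_zero, Matrix.cons_val_one,
      Matrix.cons_val_two, Matrix.cons_val_three]
    refine M.add_mem (M.add_mem (M.add_mem ?_ (M.smul_of_tower_mem _ hx))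
      (M.smul_of_tower_mem _ hy)) (M.smul_of_tower_mem _ (M.pow_mem_of_mem hx 2 two_pos))
    simpa only [Algebra.algebraMap_eq_smul_one] using hmem hc₀
  have hK := RingHom.ker_isMaximal_of_surjective χ hχ
  exact .of_unique_max_ideal
    ⟨_, hK, fun M hM ↦ (hK.eq_of_le hM.ne_top (hχM M hM)).symm⟩

theorem map_rel₁ {m : Ideal O} (h2 : (2 : O) ∈ m) :
    map (Ideal.Quotient.mk m) (rel₁ O) = X 0 ^ 2 - X 1 ^ 2 := by
  simp [rel₁, two_eq_zero_of_mem h2]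

theorem map_rel₂ {m : Ideal O} (h2 : (2 : O) ∈ m) :
    map (Ideal.Quotient.mk m) (rel₂ O) = X 0 * X 1 := by
  simp [rel₂, two_eq_zero_of_mem h2,
    show (4 : MvPolynomial (Fin 2) (O ⧸ m)) = 2 * 2 by norm_num]

def quotientMapEquiv {m : Ideal O} (h2 : (2 : O) ∈ m) :
    Corner O ⧸ m.map (algebraMap O (Corner O)) ≃+*
      MvPolynomial (Fin 2) (O ⧸ m) ⧸
        Ideal.span {(X 0 : MvPolynomial (Fin 2) (O ⧸ m)) ^ 2 - X 1 ^ 2, X 0 * X 1} :=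
  (quotientSpanModIdealEquiv _ m).trans <|
    Ideal.quotEquivOfEq (by rw [Set.image_pair, map_rel₁ h2, map_rel₂ h2])

end SL23

end

theorem stmt_17_general (O : Type*) [CommRing O] [IsDomain O] [IsDiscreteValuationRing O]
    [CharZero O] (h2 : ¬ IsUnit (2 : O)) :
    let R := MvPolynomial (Fin 2) O ⧸
      Ideal.span {(X 0 : MvPolynomial (Fin 2) O) ^ 2 - X 1 ^ 2 - 2 * (X 0 - X 1),
        X 0 * X 1 - 2 * X 0 ^ 2 + 4 * X 0}
    Module.Free O R ∧ Module.finrank O R = 4 ∧ (∀ a b : R, a * b = b * a) ∧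
    IsLocalRing R ∧
    Nonempty ((R ⧸ Ideal.map (algebraMap O R) (maximalIdeal O)) ≃+*
      (MvPolynomial (Fin 2) (ResidueField O) ⧸
        Ideal.span {(X 0 : MvPolynomial (Fin 2) (ResidueField O)) ^ 2 - X 1 ^ 2, X 0 * X 1})) := by
  intro R
  let b : Module.Basis (Fin 4) O R := SL23.basis (isUnit_three_of_two_mem_maximalIdeal h2)
  exact ⟨.of_basis b, by rw [Module.finrank_eq_card_basis b, Fintype.card_fin], mul_comm,
    SL23.isLocalRing h2, ⟨SL23.quotientMapEquiv h2⟩⟩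

/-- For `O` a complete discrete valuation ring of mixed characteristic `(0,2)`, the
`O`-algebra `O[X,Y]/(X² − Y² − 2(X−Y), XY − 2X² + 4X)` is a free `O`-module of rank 4,
commutative and local, and its reduction modulo the maximal ideal of `O` is isomorphic to
`k[X,Y]/(X² − Y², XY)` where `k` is the residue field of `O`. -/
theorem stmt_17 (O : Type*) [CommRing O] [IsDomain O] [IsDiscreteValuationRing O]
    [CharZero O] [IsAdicComplete (maximalIdeal O) O] (h2 : ¬ IsUnit (2 : O)) :
    let R := MvPolynomial (Fin 2) O ⧸
      Ideal.span {(X 0 : MvPolynomial (Fin 2) O) ^ 2 - X 1 ^ 2 - 2 * (X 0 - X 1),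
        X 0 * X 1 - 2 * X 0 ^ 2 + 4 * X 0}
    Module.Free O R ∧ Module.finrank O R = 4 ∧ (∀ a b : R, a * b = b * a) ∧
    IsLocalRing R ∧
    Nonempty ((R ⧸ Ideal.map (algebraMap O R) (maximalIdeal O)) ≃+*
      (MvPolynomial (Fin 2) (ResidueField O) ⧸
        Ideal.span {(X 0 : MvPolynomial (Fin 2) (ResidueField O)) ^ 2 - X 1 ^ 2, X 0 * X 1})) :=
  stmt_17_general O h2
end
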